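/- arXiv:2104.05385 — 2 statements merged into one kernel-verified Lean document; each statement's English description precedes it below -/
import Mathlib

section
/- Let p : (ℂ,0) → ℂ^{n+1} be a holomorphic curve germ with p(0) = x, let f : ℂ^{n+1} → ℂ be holomorphic with f(x) = 0, and let ℓ(v) = ⟨v, a⟩ be a linear form with ‖a‖ = 1 and ℓ(p(t)) not identically zero. Assume that along p(t) the differential df_{p(t)} is a scalar multiple of ℓ (i.e., p is a parametrization of a branch of the relative polar curve of f with respect to ℓ), and that all partial derivatives of f vanish at x (f ∈ 𝔪²). Then lim_{t→0} f(p(t))/ℓ(p(t)) = 0. -/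
/-!
Write `g = f ∘ p` and `h = ℓ ∘ p`. Colinearity of `df_{p t}` with `ℓ`, together with `ℓ a = 1`,
gives `g' = L · h'` with `L t = df_{p t} a`, and `L t → df_x a = 0` because `f ∈ 𝔪²`. Hence
`g' / h' → 0`, and since `g 0 = 0`, l'Hôpital's rule for analytic functions of one variable gives
`g / h → 0`: when `h 0 = 0` too, both quotients have the same meromorphic order at `0`.
-/

open Filter Topology

section LHopital

variable {𝕜 : Type*} [NontriviallyNormedField 𝕜] [CompleteSpace 𝕜] [CharZero 𝕜]
  {f g : 𝕜 → 𝕜} {x : 𝕜}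

theorem AnalyticAt.meromorphicOrderAt_deriv_add_one (hf : AnalyticAt 𝕜 f x) (hfx : f x = 0) :
    meromorphicOrderAt (deriv f) x + 1 = meromorphicOrderAt f x := by
  have h := hf.analyticOrderAt_deriv_add_one
  simp only [hfx, sub_zero] at h
  rw [hf.meromorphicOrderAt_eq, hf.deriv.meromorphicOrderAt_eq, ← h]
  cases analyticOrderAt (deriv f) x with
  | top => simp
  | coe m =>
    rw [← Nat.cast_add_one (R := ℕ∞), ENat.map_natCast, ENat.map_natCast]
    push_cast
    rfl

theorem WithTop.add_one_sub_add_one (a b : WithTop ℤ) : (a + 1) - (b + 1) = a - b := by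
  cases a <;> cases b <;> first | rfl | (norm_cast; ring)

theorem AnalyticAt.meromorphicOrderAt_deriv_div_deriv (hf : AnalyticAt 𝕜 f x)
    (hg : AnalyticAt 𝕜 g x) (hfx : f x = 0) (hgx : g x = 0) :
    meromorphicOrderAt (deriv f / deriv g) x = meromorphicOrderAt (f / g) x := by
  rw [meromorphicOrderAt_div hf.deriv.meromorphicAt hg.deriv.meromorphicAt,
    meromorphicOrderAt_div hf.meromorphicAt hg.meromorphicAt,
    ← hf.meromorphicOrderAt_deriv_add_one hfx, ← hg.meromorphicOrderAt_deriv_add_one hgx,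
    WithTop.add_one_sub_add_one]

theorem AnalyticAt.tendsto_div_of_tendsto_deriv_div (hf : AnalyticAt 𝕜 f x)
    (hg : AnalyticAt 𝕜 g x) (hfx : f x = 0)
    (hfg : Tendsto (deriv f / deriv g) (𝓝[≠] x) (𝓝 0)) :
    Tendsto (f / g) (𝓝[≠] x) (𝓝 0) := by
  by_cases hgx : g x = 0
  · rwa [tendsto_zero_iff_meromorphicOrderAt_pos (hf.meromorphicAt.div hg.meromorphicAt),
      ← hf.meromorphicOrderAt_deriv_div_deriv hg hfx hgx,
      ← tendsto_zero_iff_meromorphicOrderAt_pos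
        (hf.deriv.meromorphicAt.div hg.deriv.meromorphicAt)]
  · simpa [hfx] using
      (hf.continuousAt.div hg.continuousAt hgx).tendsto.mono_left nhdsWithin_le_nhds

end LHopital

theorem Continuous.tendstoLocallyUniformly_nhds {α β γ : Type*} [TopologicalSpace α]
    [TopologicalSpace β] [LocallyCompactSpace β] [UniformSpace γ]
    {F : α → β → γ} (hF : Continuous ↿F) (x : α) :
    TendstoLocallyUniformly F (F x) (𝓝 x) := by
  refine tendstoLocallyUniformly_iff_forall_isCompact.mpr fun K hK u hu => ?_
  obtain ⟨v, hv, hvK⟩ := hK.mem_uniformity_of_prod hF.continuousOn (Set.mem_univ x)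
    (symm_le_uniformity hu)
  rw [nhdsWithin_univ] at hv
  filter_upwards [hv] with y hy z hz using hvK y hy z hz

theorem Differentiable.continuous_fderiv_apply {E F : Type*} [NormedAddCommGroup E]
    [NormedSpace ℂ E] [ProperSpace E] [NormedAddCommGroup F] [NormedSpace ℂ F] [CompleteSpace F]
    {f : E → F} (hf : Differentiable ℂ f) (v : E) :
    Continuous fun y => fderiv ℂ f y v := by
  -- The slices `s ↦ f (y + s • v)` converge locally uniformly as `y` varies, hence so do their
  -- derivatives (Weierstrass), and `fderiv ℂ f y v` is the derivative of the slice at `0`.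
  set φ : E → ℂ → F := fun y s => f (y + s • v)
  have hφ_deriv : ∀ y, _root_.deriv (φ y) 0 = fderiv ℂ f y v := fun y => by
    have := (hf (y + (0 : ℂ) • v)).hasFDerivAt.comp_hasDerivAt (0 : ℂ)
      (((hasDerivAt_id (0 : ℂ)).smul_const v).const_add y)
    simpa [Function.comp_def] using this.deriv
  have hφ : Continuous ↿φ :=
    hf.continuous.comp (by fun_prop : Continuous fun q : E × ℂ => q.1 + q.2 • v)
  refine continuous_iff_continuousAt.mpr fun y => ?_
  have := ((hφ.tendstoLocallyUniformly_nhds y).tendstoLocallyUniformlyOn (s := Set.univ)).deriv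
    (.of_forall fun y => (by fun_prop : Differentiable ℂ (φ y)).differentiableOn) isOpen_univ
  simpa [ContinuousAt, hφ_deriv] using this.tendsto_at (Set.mem_univ 0)

theorem norm_mul_div_cancel_le {𝕜 : Type*} [NormedDivisionRing 𝕜] (a b : 𝕜) :
    ‖a * b / b‖ ≤ ‖a‖ := by
  rcases eq_or_ne b 0 with rfl | hb
  · simp
  · rw [mul_div_cancel_right₀ a hb]

theorem cerf_diagram_tangent_general
    (n : ℕ) (p : ℂ → EuclideanSpace ℂ (Fin (n + 1)))
    (f : EuclideanSpace ℂ (Fin (n + 1)) → ℂ)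
    (a : EuclideanSpace ℂ (Fin (n + 1)))
    (x : EuclideanSpace ℂ (Fin (n + 1)))
    (hp : Differentiable ℂ p) (hp0 : p 0 = x)
    (hf : Differentiable ℂ f) (hfx : f x = 0)
    (ha : ‖a‖ = 1)
    (hcolin : ∀ t : ℂ, ∃ lam : ℂ,
      ∀ v : EuclideanSpace ℂ (Fin (n + 1)), fderiv ℂ f (p t) v = lam * (inner ℂ a v : ℂ))
    (hm2 : fderiv ℂ f x = 0) :
    Tendsto (fun t : ℂ => f (p t) / (inner ℂ a (p t) : ℂ)) (𝓝[≠] (0 : ℂ)) (𝓝 0) := by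
  set g : ℂ → ℂ := fun t => f (p t)
  set h : ℂ → ℂ := fun t => inner ℂ a (p t)
  set L : ℂ → ℂ := fun t => fderiv ℂ f (p t) a
  have hg_deriv : ∀ t, deriv g t = L t * deriv h t := fun t => by
    obtain ⟨lam, hlam⟩ := hcolin t
    have hL : L t = lam := by simpa [inner_self_eq_norm_sq_to_K, ha] using hlam a
    have hh_deriv : deriv h t = inner ℂ a (deriv p t) :=
      ((innerSL ℂ a).hasFDerivAt.comp_hasDerivAt t (hp t).hasDerivAt).deriv
    calc deriv g t = fderiv ℂ f (p t) (deriv p t) :=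
          ((hf _).hasFDerivAt.comp_hasDerivAt t (hp t).hasDerivAt).deriv
      _ = lam * inner ℂ a (deriv p t) := hlam _
      _ = L t * deriv h t := by rw [hL, hh_deriv]
  have hL : Tendsto L (𝓝 0) (𝓝 0) := by
    have := ((hf.continuous_fderiv_apply a).tendsto x).comp (hp0 ▸ hp.continuous.tendsto 0)
    simpa [L, hm2, Function.comp_def] using this
  have hg : AnalyticAt ℂ g 0 := (hf.comp hp).analyticAt 0
  have hh : AnalyticAt ℂ h 0 := ((innerSL ℂ a).differentiable.comp hp).analyticAt 0
  refine hg.tendsto_div_of_tendsto_deriv_div hh (by simp [g, hp0, hfx]) ?_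
  refine squeeze_zero_norm (fun t => ?_) (by simpa using hL.norm.mono_left nhdsWithin_le_nhds)
  simpa only [Pi.div_apply, hg_deriv] using norm_mul_div_cancel_le (L t) _

/-- Let `p : (ℂ,0) → ℂ^{n+1}` be a holomorphic curve germ with `p 0 = x`,
`f : ℂ^{n+1} → ℂ` holomorphic with `f x = 0`, and `ℓ v = ⟪a, v⟫` a linear form with `‖a‖ = 1`
and `ℓ ∘ p` not identically zero near `0`. If along `p t` the differential `df_{p t}` is a
scalar multiple of `ℓ` (parametrization of a branch of the relative polar curve), and
`df_x = 0` (i.e. `f ∈ 𝔪²`), then `f (p t) / ℓ (p t) → 0` as `t → 0`. -/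
theorem cerf_diagram_tangent
    (n : ℕ) (p : ℂ → EuclideanSpace ℂ (Fin (n + 1)))
    (f : EuclideanSpace ℂ (Fin (n + 1)) → ℂ)
    (a : EuclideanSpace ℂ (Fin (n + 1)))
    (x : EuclideanSpace ℂ (Fin (n + 1)))
    (hp : Differentiable ℂ p) (hp0 : p 0 = x)
    (hf : Differentiable ℂ f) (hfx : f x = 0)
    (ha : ‖a‖ = 1)
    (hℓp : ∀ᶠ t in 𝓝[≠] (0 : ℂ), (inner ℂ a (p t) : ℂ) ≠ 0)
    (hcolin : ∀ t : ℂ, ∃ lam : ℂ,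
      ∀ v : EuclideanSpace ℂ (Fin (n + 1)), fderiv ℂ f (p t) v = lam * (inner ℂ a v : ℂ))
    (hm2 : fderiv ℂ f x = 0) :
    Tendsto (fun t : ℂ => f (p t) / (inner ℂ a (p t) : ℂ)) (𝓝[≠] (0 : ℂ)) (𝓝 0) :=
  cerf_diagram_tangent_general n p f a x hp hp0 hf hfx ha hcolin hm2
end

section
/- Define h_θ on the image of G(s,t) = (s², s⁵ + ts, t) by h_θ(G(s,t)) = G(e^{iθ/4} s, e^{iθ} t). Then h_θ is well defined: if G(s,t) = G(s',t') then G(e^{iθ/4}s, e^{iθ}t) = G(e^{iθ/4}s', e^{iθ}t'). Moreover, for every s ∈ ℂ, t ∈ ℂ, θ ∈ ℝ: |e^{iθ/4}s|^{10} + |e^{iθ/4}s|²·|(e^{iθ/4}s)⁴ + e^{iθ}t|² = |s|^{10} + |s|²·|s⁴ + t|², so h_θ preserves the set {G(s,t) : |s|^{10} + |s|²|s⁴+t|² ≤ 1}. -/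
open Complex

noncomputable def Gmap (s t : ℂ) : (ℂ × ℂ) × ℂ := ((s ^ 2, s ^ 5 + t * s), t)

/-!
`G` is weighted homogeneous for the weights `(1, 4)` on `(s, t)`, so replacing `(s, t)` by
`(u s, u⁴ t)` multiplies the coordinates of `G(s, t)` by `u², u⁵, u⁴`; hence the rotation
descends to the image of `G`. With `|u| = 1` the gauge `|s|¹⁰ + |s|²|s⁴ + t|²` is unchanged,
because `(u s)⁴ + u⁴ t = u⁴ (s⁴ + t)`. Taking `u = e^{iθ/4}` gives `u⁴ = e^{iθ}`.
-/

theorem Gmap_mul_mul_pow_four (u s t : ℂ) :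
    Gmap (u * s) (u ^ 4 * t) =
      ((u ^ 2 * (Gmap s t).1.1, u ^ 5 * (Gmap s t).1.2), u ^ 4 * (Gmap s t).2) := by
  simp only [Gmap, Prod.mk.injEq, and_true]
  constructor <;> ring

theorem Gmap_mul_mul_pow_four_congr (u : ℂ) {s t s' t' : ℂ} (h : Gmap s t = Gmap s' t') :
    Gmap (u * s) (u ^ 4 * t) = Gmap (u * s') (u ^ 4 * t') := by
  rw [Gmap_mul_mul_pow_four, Gmap_mul_mul_pow_four, h]

/-- The non-Euclidean gauge `|x|⁵ + |y|²` evaluated at `(x, y) = g_t(s) = (s², s⁵ + t s)`. -/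
noncomputable def gmapGauge (s t : ℂ) : ℝ := ‖s‖ ^ 10 + ‖s‖ ^ 2 * ‖s ^ 4 + t‖ ^ 2

theorem gmapGauge_mul_mul_pow_four {u : ℂ} (hu : ‖u‖ = 1) (s t : ℂ) :
    gmapGauge (u * s) (u ^ 4 * t) = gmapGauge s t := by
  have hfactor : (u * s) ^ 4 + u ^ 4 * t = u ^ 4 * (s ^ 4 + t) := by ring
  simp only [gmapGauge, hfactor, norm_mul, norm_pow, hu, one_pow, one_mul]

theorem norm_exp_ofReal_mul_I_div_four (θ : ℝ) : ‖exp (θ * I / 4)‖ = 1 := by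
  rw [show (θ : ℂ) * I / 4 = ((θ / 4 : ℝ) : ℂ) * I by push_cast; ring]
  exact norm_exp_ofReal_mul_I _

theorem exp_mul_I_div_four_pow_four (θ : ℝ) : exp (θ * I / 4) ^ 4 = exp (θ * I) := by
  rw [← exp_nat_mul]
  ring_nf

/-- The weighted rotation `(s,t) ↦ (e^{iθ/4} s, e^{iθ} t)` descends to the
image of the unfolding `G(s,t) = (s², s⁵ + ts, t)` (well-definedness of `h_θ`) and preserves
the non-Euclidean ball `|s|¹⁰ + |s|²·|s⁴ + t|² ≤ 1`. -/
theorem htheta_well_defined_and_isometric (θ : ℝ) :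
    (∀ s t s' t' : ℂ, Gmap s t = Gmap s' t' →
      Gmap (Complex.exp (θ * I / 4) * s) (Complex.exp (θ * I) * t)
        = Gmap (Complex.exp (θ * I / 4) * s') (Complex.exp (θ * I) * t')) ∧
    (∀ s t : ℂ,
      ‖Complex.exp (θ * I / 4) * s‖ ^ 10
        + ‖Complex.exp (θ * I / 4) * s‖ ^ 2
          * ‖(Complex.exp (θ * I / 4) * s) ^ 4 + Complex.exp (θ * I) * t‖ ^ 2
      = ‖s‖ ^ 10 + ‖s‖ ^ 2 * ‖s ^ 4 + t‖ ^ 2) ∧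
    (∀ p ∈ {q : (ℂ × ℂ) × ℂ | ∃ s t : ℂ, q = Gmap s t ∧
        ‖s‖ ^ 10 + ‖s‖ ^ 2 * ‖s ^ 4 + t‖ ^ 2 ≤ 1},
      ∃ s t : ℂ,
        ((fun q : (ℂ × ℂ) × ℂ => q) p = Gmap s t) ∧
        Gmap (Complex.exp (θ * I / 4) * s) (Complex.exp (θ * I) * t) ∈
          {q : (ℂ × ℂ) × ℂ | ∃ s' t' : ℂ, q = Gmap s' t' ∧
            ‖s'‖ ^ 10 + ‖s'‖ ^ 2 * ‖s' ^ 4 + t'‖ ^ 2 ≤ 1}) := by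
  rw [← exp_mul_I_div_four_pow_four θ]
  have hu := norm_exp_ofReal_mul_I_div_four θ
  refine ⟨fun s t s' t' h => Gmap_mul_mul_pow_four_congr _ h,
    gmapGauge_mul_mul_pow_four hu, ?_⟩
  rintro p ⟨s, t, rfl, hle⟩
  exact ⟨s, t, rfl, _, _, rfl, (gmapGauge_mul_mul_pow_four hu s t).le.trans hle⟩
end
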